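/- Let V be an n-dimensional real vector space, let (F,G) be a transverse pair of complete flags in V, and let (F,P,Q) be a transverse triple of complete flags in V whose first flag is F. Then for all integers i,j,k with 1 ≤ i ≤ n−1, j,k ≥ 0 and i+j+k = n, the endomorphism A^{i,j,k}_{F,P,Q} − A^{i,n−i}_{F,G} maps F^(m) into F^(m−1) for every 1 ≤ m ≤ n; in particular it is nilpotent. -/

import Mathlib

/-- `F` is a complete flag in an `n`-dimensional real vector space:
`F 0 ⊆ F 1 ⊆ ⋯ ⊆ F n` with `dim (F l) = l` for `0 ≤ l ≤ n`. -/
def IsFlag (n : ℕ) {V : Type*} [AddCommGroup V] [Module ℝ V]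
    (F : ℕ → Submodule ℝ V) : Prop :=
  (∀ l, l < n → F l ≤ F (l + 1)) ∧ ∀ l, l ≤ n → Module.finrank ℝ (F l) = l

/-- A triple of flags is transverse if `F a + G b + H c = V` whenever `a + b + c = n`. -/
def TransverseTriple (n : ℕ) {V : Type*} [AddCommGroup V] [Module ℝ V]
    (F G H : ℕ → Submodule ℝ V) : Prop :=
  ∀ a b c : ℕ, a + b + c = n → F a ⊔ G b ⊔ H c = ⊤

/-- A pair of flags is transverse if `F a + G (n - a) = V` for all `0 ≤ a ≤ n`. -/
def TransversePair (n : ℕ) {V : Type*} [AddCommGroup V] [Module ℝ V]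
    (F G : ℕ → Submodule ℝ V) : Prop :=
  ∀ a, a ≤ n → F a ⊔ G (n - a) = ⊤

/-- `A` is the `(i,j,k)`-eruption endomorphism of the triple `(F,G,H)`: it acts as the
scalar `(n - i)/n` on `F i` and as the scalar `-i/n` on `G j + H k`. -/
def IsEruption (n i j k : ℕ) {V : Type*} [AddCommGroup V] [Module ℝ V]
    (F G H : ℕ → Submodule ℝ V) (A : Module.End ℝ V) : Prop :=
  (∀ v ∈ F i, A v = (((n : ℝ) - (i : ℝ)) / (n : ℝ)) • v) ∧
  (∀ v ∈ G j ⊔ H k, A v = (-(i : ℝ) / (n : ℝ)) • v)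

/-- `A` is the `(i, n-i)`-shearing endomorphism of the pair `(F,G)`: it acts as the
scalar `(n - i)/n` on `F i` and as the scalar `-i/n` on `G (n - i)`. -/
def IsShearing (n i : ℕ) {V : Type*} [AddCommGroup V] [Module ℝ V]
    (F G : ℕ → Submodule ℝ V) (A : Module.End ℝ V) : Prop :=
  (∀ v ∈ F i, A v = (((n : ℝ) - (i : ℝ)) / (n : ℝ)) • v) ∧
  (∀ v ∈ G (n - i), A v = (-(i : ℝ) / (n : ℝ)) • v)

/-!
Both endomorphisms act as the scalar `c = (n - i)/n` on `F i` and as the scalar `d = -i/n` on a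
complement of `F i`, so their difference vanishes on `F i`. Writing `v = f + w = f' + w'` in the two
decompositions, the difference sends `v` to `(c - d) • (f - f')`, so its image lies in `F i`.
Hence it kills `F m` for `m ≤ i`, maps everything into `F i ≤ F (m - 1)` for `m > i`, and squares
to zero.
-/

lemma IsFlag.mono {n : ℕ} {V : Type*} [AddCommGroup V] [Module ℝ V]
    {F : ℕ → Submodule ℝ V} (hF : IsFlag n F) {a b : ℕ} (hab : a ≤ b) (hb : b ≤ n) :
    F a ≤ F b := by
  induction b, hab using Nat.le_induction with
  | base => exact le_rfl
  | succ b _ ih => exact (ih (by omega)).trans (hF.1 b (by omega))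

section ScalarOnComplements

variable {R V : Type*} [CommRing R] [AddCommGroup V] [Module R V]

lemma sub_apply_mem_of_smul_on_sup_eq_top {U W W' : Submodule R V}
    (hW : U ⊔ W = ⊤) (hW' : U ⊔ W' = ⊤) {A B : Module.End R V} {c d : R}
    (hAU : ∀ v ∈ U, A v = c • v) (hAW : ∀ v ∈ W, A v = d • v)
    (hBU : ∀ v ∈ U, B v = c • v) (hBW' : ∀ v ∈ W', B v = d • v) (v : V) :
    (A - B) v ∈ U := by
  obtain ⟨f, hf, w, hw, rfl⟩ := Submodule.mem_sup.mp (hW ▸ Submodule.mem_top : v ∈ U ⊔ W)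
  obtain ⟨f', hf', w', hw', hv⟩ :=
    Submodule.mem_sup.mp (hW' ▸ Submodule.mem_top : f + w ∈ U ⊔ W')
  have hw'_eq : w' = f + w - f' := eq_sub_of_add_eq' hv
  have key : (A - B) (f + w) = (c - d) • (f - f') := by
    rw [LinearMap.sub_apply, map_add, hAU f hf, hAW w hw, ← hv, map_add, hBU f' hf',
      hBW' w' hw', hw'_eq]
    module
  rw [key]
  exact U.smul_mem _ (U.sub_mem hf hf')

lemma isNilpotent_of_apply_mem_of_eq_zero {U : Submodule R V} {T : Module.End R V}
    (hrange : ∀ v, T v ∈ U) (hker : ∀ v ∈ U, T v = 0) : IsNilpotent T :=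
  ⟨2, LinearMap.ext fun v => by rw [pow_two, Module.End.mul_apply, hker _ (hrange v)]; rfl⟩

end ScalarOnComplements

theorem statement18_general (n : ℕ) (V : Type*) [AddCommGroup V] [Module ℝ V]
    (F G P Q : ℕ → Submodule ℝ V)
    (hF : IsFlag n F)
    (hFG : TransversePair n F G) (hFPQ : TransverseTriple n F P Q)
    (i j k : ℕ) (hi' : i < n) (hijk : i + j + k = n)
    (A B : Module.End ℝ V)
    (hA : IsEruption n i j k F P Q A) (hB : IsShearing n i F G B) :
    (∀ m, 1 ≤ m → m ≤ n → ∀ v ∈ F m, (A - B) v ∈ F (m - 1)) ∧ IsNilpotent (A - B) := by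
  have hrange : ∀ v, (A - B) v ∈ F i :=
    sub_apply_mem_of_smul_on_sup_eq_top (by rw [← sup_assoc]; exact hFPQ i j k hijk)
      (hFG i hi'.le) hA.1 hA.2 hB.1 hB.2
  have hker : ∀ v ∈ F i, (A - B) v = 0 := fun v hv => by
    rw [LinearMap.sub_apply, hA.1 v hv, hB.1 v hv, sub_self]
  refine ⟨fun m _ hmn v hv => ?_, isNilpotent_of_apply_mem_of_eq_zero hrange hker⟩
  rcases le_or_gt m i with hmi | hmi
  · rw [hker v (hF.mono hmi hi'.le hv)]
    exact zero_mem _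
  · exact hF.mono (by omega) (by omega) (hrange v)

theorem statement18 (n : ℕ) (V : Type*) [AddCommGroup V] [Module ℝ V] [FiniteDimensional ℝ V]
    (hV : Module.finrank ℝ V = n)
    (F G P Q : ℕ → Submodule ℝ V)
    (hF : IsFlag n F) (hG : IsFlag n G) (hP : IsFlag n P) (hQ : IsFlag n Q)
    (hFG : TransversePair n F G) (hFPQ : TransverseTriple n F P Q)
    (i j k : ℕ) (hi : 1 ≤ i) (hi' : i < n) (hijk : i + j + k = n)
    (A B : Module.End ℝ V)
    (hA : IsEruption n i j k F P Q A) (hB : IsShearing n i F G B) :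
    (∀ m, 1 ≤ m → m ≤ n → ∀ v ∈ F m, (A - B) v ∈ F (m - 1)) ∧ IsNilpotent (A - B) :=
  statement18_general n V F G P Q hF hFG hFPQ i j k hi' hijk A B hA hB
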